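/- Let A₁ = P₁ − R₁ + S₁ and A₂ = P₂ − R₂ + S₂ be convergent double weak splittings of type II of symmetric nonsingular matrices A₁ ∈ ℝ^{n×n} and A₂ ∈ ℝ^{n×n} respectively, with iteration matrices W̃₁ and W̃₂. If R₁P₁⁻¹ ≥ R₂P₂⁻¹ and A₁P₁⁻¹ ≥ A₂P₂⁻¹, then ρ(W̃₁) ≤ ρ(W̃₂) < 1. -/

import Mathlib

/-!
Transposing, `ρ(W̃)` is the spectral radius of the block companion matrix `W = [[H, I], [K, 0]]`
with `H = RP⁻¹ ≥ 0` and `K = -SP⁻¹ ≥ 0`, and since `AP⁻¹ = I - H - K` the hypotheses read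
`H₂ ≤ H₁` and `H₁ + K₁ ≤ H₂ + K₂`.

For a nonnegative matrix `B`, the moduli `|v|` of an eigenvector for an eigenvalue of maximal
modulus satisfy `ρ(B) |v| ≤ B |v|`; conversely `α x ≤ B x` with `0 ≤ x ≠ 0` gives
`α ^ m x ≤ B ^ m x`, hence `α ^ m ≤ ‖B ^ m‖`, and `α ≤ ρ(B)` by Gelfand's formula.

Let `ρ = ρ(W₁) ≤ 1` and `(x, y)` be such a vector for `W₁`. Then
`ρ² x ≤ ρ H₁ x + K₁ x ≤ ρ H₂ x + (H₁ - H₂) x + K₁ x ≤ ρ H₂ x + K₂ x`,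
which says exactly that `ρ (ρ x, K₂ x) ≤ W₂ (ρ x, K₂ x)`, so `ρ ≤ ρ(W₂)`.
-/

open Matrix Filter Topology

/-- The spectral radius of a real square matrix: the maximum (supremum) of the
moduli of its complex eigenvalues. -/
noncomputable def specRad {n : Type*} [Fintype n] [DecidableEq n]
    (B : Matrix n n ℝ) : ℝ :=
  sSup ((fun z : ℂ => ‖z‖) '' spectrum ℂ (B.map Complex.ofReal))

/-- Entrywise order on real matrices: `entryLE A B` means every entry of `A` is
at most the corresponding entry of `B`. -/
def entryLE {m n : Type*} (A B : Matrix m n ℝ) : Prop :=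
  ∀ i j, A i j ≤ B i j

/-- `X` is the Moore–Penrose inverse of `A`. -/
def IsMoorePenrose {m n : Type*} [Fintype m] [Fintype n]
    (A : Matrix m n ℝ) (X : Matrix n m ℝ) : Prop :=
  A * X * A = A ∧ X * A * X = X ∧ (A * X)ᵀ = A * X ∧ (X * A)ᵀ = X * A

/-- Iteration matrix of a double weak splitting of type II:
`W̃ = [[(RP⁻¹)ᵀ, −(SP⁻¹)ᵀ],[I, 0]]`. -/
noncomputable def itMatII {n : Type*} [Fintype n] [DecidableEq n]
    (P R S : Matrix n n ℝ) : Matrix (n ⊕ n) (n ⊕ n) ℝ :=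
  Matrix.fromBlocks ((R * P⁻¹)ᵀ) (-((S * P⁻¹)ᵀ)) 1 0

/-- Iteration matrix of a double weak splitting of type I:
`Ŵ = [[P⁻¹R, −P⁻¹S],[I, 0]]`. -/
noncomputable def itMatI {n : Type*} [Fintype n] [DecidableEq n]
    (P R S : Matrix n n ℝ) : Matrix (n ⊕ n) (n ⊕ n) ℝ :=
  Matrix.fromBlocks (P⁻¹ * R) (-(P⁻¹ * S)) 1 0

section EntrywiseOrder

variable {m n : Type*} [Fintype n]

lemma mulVec_le_mulVec_of_nonneg {B : Matrix m n ℝ} (hB : entryLE 0 B) {x y : n → ℝ}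
    (hxy : x ≤ y) : B *ᵥ x ≤ B *ᵥ y := fun i =>
  Finset.sum_le_sum fun j _ => mul_le_mul_of_nonneg_left (hxy j) (hB i j)

lemma mulVec_le_mulVec_of_entryLE {B C : Matrix m n ℝ} (hBC : entryLE B C) {x : n → ℝ}
    (hx : 0 ≤ x) : B *ᵥ x ≤ C *ᵥ x := fun i =>
  Finset.sum_le_sum fun j _ => mul_le_mul_of_nonneg_right (hBC i j) (hx j)

end EntrywiseOrder

section SpectralRadius

variable {k : Type*} [Fintype k] [DecidableEq k]

attribute [local instance] Matrix.linftyOpNormedRing Matrix.linftyOpNormedAlgebra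

lemma specRad_nonneg (B : Matrix k k ℝ) : 0 ≤ specRad B :=
  Real.sSup_nonneg (by rintro _ ⟨μ, -, rfl⟩; exact norm_nonneg μ)

lemma specRad_of_isEmpty [IsEmpty k] (B : Matrix k k ℝ) : specRad B = 0 := by
  simp [specRad]

lemma spectrum_transpose (M : Matrix k k ℂ) : spectrum ℂ Mᵀ = spectrum ℂ M := by
  ext μ
  have : algebraMap ℂ (Matrix k k ℂ) μ - Mᵀ = (algebraMap ℂ (Matrix k k ℂ) μ - M)ᵀ := by
    rw [transpose_sub, Algebra.algebraMap_eq_smul_one, transpose_smul, transpose_one]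
  simp only [spectrum.mem_iff, this, isUnit_iff_isUnit_det, det_transpose]

lemma specRad_transpose (B : Matrix k k ℝ) : specRad Bᵀ = specRad B := by
  rw [specRad, specRad, transpose_map, spectrum_transpose]

lemma norm_le_specRad {B : Matrix k k ℝ} {μ : ℂ} (hμ : μ ∈ spectrum ℂ (B.map Complex.ofReal)) :
    ‖μ‖ ≤ specRad B :=
  le_csSup ((finite_spectrum _).image _).bddAbove ⟨μ, hμ, rfl⟩

lemma exists_norm_eq_specRad [Nonempty k] (B : Matrix k k ℝ) :
    ∃ μ ∈ spectrum ℂ (B.map Complex.ofReal), ‖μ‖ = specRad B := by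
  have : CompleteSpace (Matrix k k ℂ) := FiniteDimensional.complete ℂ _
  exact ((spectrum.nonempty _).image _).csSup_mem ((finite_spectrum _).image _)

lemma spectralRadius_le_ofReal_specRad (B : Matrix k k ℝ) :
    spectralRadius ℂ (B.map Complex.ofReal) ≤ ENNReal.ofReal (specRad B) :=
  iSup₂_le fun μ hμ => by
    rw [← ENNReal.ofReal_coe_nnreal, coe_nnnorm]
    exact ENNReal.ofReal_le_ofReal (norm_le_specRad hμ)

lemma le_spectralRadius_of_pow_le_norm {A : Type*} [NormedRing A] [NormedAlgebra ℂ A]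
    [CompleteSpace A] {a : A} {r : ℝ} (h : ∀ m : ℕ, r ^ m ≤ ‖a ^ m‖) :
    ENNReal.ofReal r ≤ spectralRadius ℂ a := by
  refine ge_of_tendsto (spectrum.pow_norm_pow_one_div_tendsto_nhds_spectralRadius a) ?_
  filter_upwards [eventually_ne_atTop 0] with m hm
  refine ENNReal.ofReal_le_ofReal ?_
  rcases le_or_gt r 0 with hr | hr
  · exact hr.trans (by positivity)
  calc r = (r ^ m) ^ (1 / (m : ℝ)) := by rw [one_div, Real.pow_rpow_inv_natCast hr.le hm]
    _ ≤ ‖a ^ m‖ ^ (1 / (m : ℝ)) := by gcongr; exact h m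

lemma linfty_opNorm_map_ofReal (C : Matrix k k ℝ) :
    ‖C.map Complex.ofReal‖ = ‖C‖ := by
  simp [linfty_opNorm_def]

lemma pow_smul_le_pow_mulVec {B : Matrix k k ℝ} (hB : entryLE 0 B) {α : ℝ} (hα : 0 ≤ α)
    {x : k → ℝ} (h : α • x ≤ B *ᵥ x) (m : ℕ) : α ^ m • x ≤ (B ^ m) *ᵥ x := by
  induction m with
  | zero => simp
  | succ m ih =>
    calc α ^ (m + 1) • x = α ^ m • (α • x) := by rw [pow_succ, mul_smul]
      _ ≤ α ^ m • (B *ᵥ x) := smul_le_smul_of_nonneg_left h (pow_nonneg hα m)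
      _ = B *ᵥ (α ^ m • x) := (mulVec_smul B _ x).symm
      _ ≤ B *ᵥ ((B ^ m) *ᵥ x) := mulVec_le_mulVec_of_nonneg hB ih
      _ = (B ^ (m + 1)) *ᵥ x := by rw [mulVec_mulVec, pow_succ']

lemma le_linfty_opNorm_of_smul_le_mulVec {B : Matrix k k ℝ} {x : k → ℝ} (hx : 0 ≤ x)
    (hx0 : x ≠ 0) {c : ℝ} (h : c • x ≤ B *ᵥ x) : c ≤ ‖B‖ := by
  rcases le_or_gt c 0 with hc | hc
  · exact hc.trans (norm_nonneg B)
  have hcx : ‖c • x‖ ≤ ‖B *ᵥ x‖ := by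
    refine (pi_norm_le_iff_of_nonneg (norm_nonneg _)).2 fun i => ?_
    have hcxi : 0 ≤ (c • x) i := smul_nonneg hc.le (hx i)
    rw [Real.norm_of_nonneg hcxi]
    exact (h i).trans ((le_abs_self _).trans (norm_le_pi_norm (B *ᵥ x) i))
  rw [norm_smul, Real.norm_of_nonneg hc.le] at hcx
  exact le_of_mul_le_mul_right (hcx.trans (linfty_opNorm_mulVec B x)) (norm_pos_iff.2 hx0)

theorem le_specRad_of_smul_le_mulVec {B : Matrix k k ℝ} (hB : entryLE 0 B) {x : k → ℝ}
    (hx : 0 ≤ x) (hx0 : x ≠ 0) {α : ℝ} (h : α • x ≤ B *ᵥ x) : α ≤ specRad B := by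
  rcases le_or_gt α 0 with hα | hα
  · exact hα.trans (specRad_nonneg B)
  have : CompleteSpace (Matrix k k ℂ) := FiniteDimensional.complete ℂ _
  have hpow (m : ℕ) : α ^ m ≤ ‖B.map Complex.ofReal ^ m‖ := by
    rw [show B.map Complex.ofReal ^ m = (B ^ m).map Complex.ofReal from
      (B.map_pow Complex.ofRealHom m).symm, linfty_opNorm_map_ofReal]
    exact le_linfty_opNorm_of_smul_le_mulVec hx hx0 (pow_smul_le_pow_mulVec hB hα.le h m)
  rw [← ENNReal.ofReal_le_ofReal_iff (specRad_nonneg B)]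
  exact (le_spectralRadius_of_pow_le_norm hpow).trans (spectralRadius_le_ofReal_specRad B)

theorem exists_nonneg_specRad_smul_le_mulVec [Nonempty k] {B : Matrix k k ℝ}
    (hB : entryLE 0 B) : ∃ x : k → ℝ, 0 ≤ x ∧ x ≠ 0 ∧ specRad B • x ≤ B *ᵥ x := by
  obtain ⟨μ, hμ, hμρ⟩ := exists_norm_eq_specRad B
  rw [← spectrum_toLin', ← Module.End.hasEigenvalue_iff_mem_spectrum] at hμ
  obtain ⟨v, hv⟩ := hμ.exists_hasEigenvector
  have hBv : B.map Complex.ofReal *ᵥ v = μ • v := hv.apply_eq_smul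
  refine ⟨fun i => ‖v i‖, fun i => norm_nonneg _, fun h => hv.2 (funext fun i => ?_),
    fun i => ?_⟩
  · simpa using congrFun h i
  calc (specRad B • fun i => ‖v i‖) i = ‖(B.map Complex.ofReal *ᵥ v) i‖ := by
        simp [hBv, ← hμρ]
    _ ≤ ∑ j, ‖B i j * v j‖ := norm_sum_le _ _
    _ = (B *ᵥ fun j => ‖v j‖) i := by
        simp [mulVec, dotProduct, Real.norm_of_nonneg (hB i _)]

end SpectralRadius

section BlockCompanion

variable {k : Type*} [DecidableEq k]

def blockCompanion (H K : Matrix k k ℝ) : Matrix (k ⊕ k) (k ⊕ k) ℝ :=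
  fromBlocks H 1 K 0

lemma blockCompanion_nonneg {H K : Matrix k k ℝ} (hH : entryLE 0 H) (hK : entryLE 0 K) :
    entryLE 0 (blockCompanion H K) := by
  rintro (i | i) (j | j)
  · exact hH i j
  · by_cases h : i = j <;> simp [blockCompanion, one_apply, h]
  · exact hK i j
  · simp [blockCompanion]

variable [Fintype k]

lemma smul_le_blockCompanion_mulVec_iff {H K : Matrix k k ℝ} {c : ℝ} {x y : k → ℝ} :
    c • Sum.elim x y ≤ blockCompanion H K *ᵥ Sum.elim x y ↔
      c • x ≤ H *ᵥ x + y ∧ c • y ≤ K *ᵥ x := by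
  have : c • Sum.elim x y = Sum.elim (c • x) (c • y) := by ext (i | i) <;> rfl
  rw [this, blockCompanion, fromBlocks_mulVec]
  simp [Sum.elim_le_elim_iff]

lemma specRad_itMatII (P R S : Matrix k k ℝ) :
    specRad (itMatII P R S) = specRad (blockCompanion (R * P⁻¹) (-(S * P⁻¹))) := by
  rw [← specRad_transpose, itMatII, blockCompanion, fromBlocks_transpose]
  simp

lemma mul_inv_add_neg_mul_inv_of_splitting {A P R S : Matrix k k ℝ} (hA : A = P - R + S)
    (hP : IsUnit P.det) : R * P⁻¹ + -(S * P⁻¹) = 1 - A * P⁻¹ := by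
  rw [hA, add_mul, sub_mul, mul_nonsing_inv P hP]
  abel

lemma smul_le_blockCompanion_mulVec_of_le {H₁ K₁ H₂ K₂ : Matrix k k ℝ} (hH : entryLE H₂ H₁)
    (hHK : entryLE (H₁ + K₁) (H₂ + K₂)) {ρ : ℝ} (hρ₀ : 0 ≤ ρ) (hρ₁ : ρ ≤ 1) {x y : k → ℝ}
    (hx : 0 ≤ x) (h : ρ • Sum.elim x y ≤ blockCompanion H₁ K₁ *ᵥ Sum.elim x y) :
    ρ • Sum.elim (ρ • x) (K₂ *ᵥ x) ≤ blockCompanion H₂ K₂ *ᵥ Sum.elim (ρ • x) (K₂ *ᵥ x) := by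
  obtain ⟨hρx, hρy⟩ := smul_le_blockCompanion_mulVec_iff.1 h
  refine smul_le_blockCompanion_mulVec_iff.2 ⟨fun i => ?_, by rw [mulVec_smul]⟩
  have hH₂₁ := mulVec_le_mulVec_of_entryLE hH hx i
  have hHK₁₂ := mulVec_le_mulVec_of_entryLE hHK hx i
  have hρxi : ρ * x i ≤ (H₁ *ᵥ x) i + y i := hρx i
  have hρyi : ρ * y i ≤ (K₁ *ᵥ x) i := hρy i
  simp only [add_mulVec, mulVec_smul, Pi.add_apply, Pi.smul_apply, smul_eq_mul] at hHK₁₂ ⊢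
  calc ρ * (ρ * x i) ≤ ρ * ((H₁ *ᵥ x) i + y i) := mul_le_mul_of_nonneg_left hρxi hρ₀
    _ ≤ ρ * (H₁ *ᵥ x) i + (K₁ *ᵥ x) i := by linarith
    _ ≤ ρ * (H₂ *ᵥ x) i + (K₂ *ᵥ x) i := by
      nlinarith [mul_nonneg (sub_nonneg.2 hH₂₁) (sub_nonneg.2 hρ₁)]

theorem specRad_blockCompanion_le {H₁ K₁ H₂ K₂ : Matrix k k ℝ} (hH₂ : entryLE 0 H₂)
    (hK₁ : entryLE 0 K₁) (hK₂ : entryLE 0 K₂) (hH : entryLE H₂ H₁)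
    (hHK : entryLE (H₁ + K₁) (H₂ + K₂)) (hρ₁ : specRad (blockCompanion H₁ K₁) ≤ 1) :
    specRad (blockCompanion H₁ K₁) ≤ specRad (blockCompanion H₂ K₂) := by
  rcases isEmpty_or_nonempty k with hk | hk
  · exact (specRad_of_isEmpty _).trans_le (specRad_nonneg _)
  have hH₁ : entryLE 0 H₁ := fun i j => (hH₂ i j).trans (hH i j)
  obtain ⟨z, hz, hz0, hρz⟩ :=
    exists_nonneg_specRad_smul_le_mulVec (blockCompanion_nonneg hH₁ hK₁)
  obtain ⟨x, y, rfl⟩ : ∃ x y, z = Sum.elim x y := ⟨_, _, (Sum.elim_comp_inl_inr z).symm⟩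
  have hx : 0 ≤ x := fun i => hz (Sum.inl i)
  have hy : 0 ≤ y := fun i => hz (Sum.inr i)
  have hρ₀ := specRad_nonneg (blockCompanion H₁ K₁)
  generalize specRad (blockCompanion H₁ K₁) = ρ at *
  rcases hρ₀.eq_or_lt with hρ | hρ
  · exact hρ ▸ specRad_nonneg _
  have hx0 : x ≠ 0 := by
    rintro rfl
    have hy0 : y = 0 := le_antisymm (fun i => ?_) hy
    · exact hz0 (by rw [hy0]; ext (i | i) <;> rfl)
    have hρyi : ρ * y i ≤ (K₁ *ᵥ 0) i := (smul_le_blockCompanion_mulVec_iff.1 hρz).2 i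
    rw [mulVec_zero] at hρyi
    exact nonpos_of_mul_nonpos_right hρyi hρ
  refine le_specRad_of_smul_le_mulVec (blockCompanion_nonneg hH₂ hK₂) ?_ ?_
    (smul_le_blockCompanion_mulVec_of_le hH hHK hρ₀ hρ₁ hx hρz)
  · rintro (i | i)
    · exact mul_nonneg hρ₀ (hx i)
    · simpa using mulVec_le_mulVec_of_entryLE hK₂ hx i
  · intro hw
    refine hx0 (funext fun i => ?_)
    simpa [hρ.ne'] using congrFun hw (Sum.inl i)

end BlockCompanion

theorem stmt13_general {n : ℕ} (A₁ P₁ R₁ S₁ A₂ P₂ R₂ S₂ : Matrix (Fin n) (Fin n) ℝ)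
    -- double weak splittings of type II of `A₁` and `A₂`
    (hsplit₁ : A₁ = P₁ - R₁ + S₁) (hPinv₁ : IsUnit P₁.det)
    (hSP₁ : entryLE 0 (-(S₁ * P₁⁻¹)))
    (hsplit₂ : A₂ = P₂ - R₂ + S₂) (hPinv₂ : IsUnit P₂.det)
    (hRP₂ : entryLE 0 (R₂ * P₂⁻¹)) (hSP₂ : entryLE 0 (-(S₂ * P₂⁻¹)))
    -- both splittings are convergent
    (hconv₁ : specRad (itMatII P₁ R₁ S₁) < 1)
    (hconv₂ : specRad (itMatII P₂ R₂ S₂) < 1)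
    -- `R₁P₁⁻¹ ≥ R₂P₂⁻¹` and `A₁P₁⁻¹ ≥ A₂P₂⁻¹`
    (hR : entryLE (R₂ * P₂⁻¹) (R₁ * P₁⁻¹)) (hAP : entryLE (A₂ * P₂⁻¹) (A₁ * P₁⁻¹)) :
    specRad (itMatII P₁ R₁ S₁) ≤ specRad (itMatII P₂ R₂ S₂) ∧
      specRad (itMatII P₂ R₂ S₂) < 1 := by
  refine ⟨?_, hconv₂⟩
  have hHK : entryLE (R₁ * P₁⁻¹ + -(S₁ * P₁⁻¹)) (R₂ * P₂⁻¹ + -(S₂ * P₂⁻¹)) := by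
    rw [mul_inv_add_neg_mul_inv_of_splitting hsplit₁ hPinv₁,
      mul_inv_add_neg_mul_inv_of_splitting hsplit₂ hPinv₂]
    intro i j
    simp only [Matrix.sub_apply]
    linarith [hAP i j]
  simp only [specRad_itMatII] at hconv₁ ⊢
  exact specRad_blockCompanion_le hRP₂ hSP₁ hSP₂ hR hHK hconv₁.le

theorem stmt13 {n : ℕ} (A₁ P₁ R₁ S₁ A₂ P₂ R₂ S₂ : Matrix (Fin n) (Fin n) ℝ)
    (hAsym₁ : A₁ᵀ = A₁) (hAinv₁ : IsUnit A₁.det)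
    (hAsym₂ : A₂ᵀ = A₂) (hAinv₂ : IsUnit A₂.det)
    -- double weak splittings of type II of `A₁` and `A₂`
    (hsplit₁ : A₁ = P₁ - R₁ + S₁) (hPinv₁ : IsUnit P₁.det)
    (hRP₁ : entryLE 0 (R₁ * P₁⁻¹)) (hSP₁ : entryLE 0 (-(S₁ * P₁⁻¹)))
    (hsplit₂ : A₂ = P₂ - R₂ + S₂) (hPinv₂ : IsUnit P₂.det)
    (hRP₂ : entryLE 0 (R₂ * P₂⁻¹)) (hSP₂ : entryLE 0 (-(S₂ * P₂⁻¹)))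
    -- both splittings are convergent
    (hconv₁ : specRad (itMatII P₁ R₁ S₁) < 1)
    (hconv₂ : specRad (itMatII P₂ R₂ S₂) < 1)
    -- `R₁P₁⁻¹ ≥ R₂P₂⁻¹` and `A₁P₁⁻¹ ≥ A₂P₂⁻¹`
    (hR : entryLE (R₂ * P₂⁻¹) (R₁ * P₁⁻¹)) (hAP : entryLE (A₂ * P₂⁻¹) (A₁ * P₁⁻¹)) :
    specRad (itMatII P₁ R₁ S₁) ≤ specRad (itMatII P₂ R₂ S₂) ∧
      specRad (itMatII P₂ R₂ S₂) < 1 :=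
  stmt13_general A₁ P₁ R₁ S₁ A₂ P₂ R₂ S₂ hsplit₁ hPinv₁ hSP₁ hsplit₂ hPinv₂ hRP₂ hSP₂ hconv₁ hconv₂
    hR hAP
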